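/- Let μ be a continuous monotone measure, ⋆ : [0,∞)×(−∞,0] → ℝ a nondecreasing binary map, and H : ℝ → ℝ nondecreasing with H(0) = 0. For measurable f : X → ℝ with p₁ = Su_{μ,A}(f⁺) < ∞, p₂ = Su_{μ,A}(f⁻) < ∞, and p₁ ≤ sup H, the ⋆-symmetric Sugeno integral Su^⋆_{μ,A}(H(f)) := Su_{μ,A}((H∘f)⁺) ⋆ (−Su_{μ,A}((H∘f)⁻)) satisfies Su^⋆_{μ,A}(H(f)) ≤ [ min( max(H(p₁), p₁), μ(A) ) ] ⋆ [ max( H(−p₂), −p₂ ) ]. -/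

import Mathlib

/-!
For a continuous monotone measure the supremum defining `p = Su_{μ,A}(g)` is attained from both
sides: `μ(A ∩ {g > p}) ≤ p` (continuity from below) and `p ≤ μ(A ∩ {g ≥ p})` (continuity from
above). Above the level `max(H p₁, p₁)` every level set of `(H∘f)⁺` lies in `{f⁺ > p₁}`, whence
`Su((H∘f)⁺) ≤ max(H p₁, p₁)`, and trivially `Su((H∘f)⁺) ≤ μ(A)`. Dually `{f⁻ ≥ p₂}` lies in the
level set of `(H∘f)⁻` at `min(-H(-p₂), p₂)`, whence `Su((H∘f)⁻) ≥ min(-H(-p₂), p₂)`. Monotonicity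
of `⋆` in both arguments concludes.
-/

open scoped ENNReal
open Set

variable {X : Type*}

/-- Generalized Sugeno integral with respect to a binary operation `op`. -/
noncomputable def gSugeno (op : ℝ≥0∞ → ℝ≥0∞ → ℝ≥0∞) (μ : Set X → ℝ≥0∞) (A : Set X)
    (f : X → ℝ≥0∞) : ℝ≥0∞ :=
  ⨆ t : ℝ≥0∞, op t (μ (A ∩ {x | t ≤ f x}))

/-- The Sugeno integral. -/
noncomputable def sugeno (μ : Set X → ℝ≥0∞) (A : Set X) (f : X → ℝ≥0∞) : ℝ≥0∞ :=
  ⨆ t : ℝ≥0∞, min t (μ (A ∩ {x | t ≤ f x}))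

open Filter Topology

section Sugeno

variable {μ : Set X → ℝ≥0∞} {A : Set X} {g : X → ℝ≥0∞}

theorem min_le_sugeno (t : ℝ≥0∞) : min t (μ (A ∩ {x | t ≤ g x})) ≤ sugeno μ A g :=
  le_iSup (fun t => min t (μ (A ∩ {x | t ≤ g x}))) t

theorem le_sugeno_of_le_measure {c : ℝ≥0∞} (h : c ≤ μ (A ∩ {x | c ≤ g x})) :
    c ≤ sugeno μ A g :=
  (le_min le_rfl h).trans (min_le_sugeno c)

theorem sugeno_le_iff {c : ℝ≥0∞} :
    sugeno μ A g ≤ c ↔ ∀ t, c < t → μ (A ∩ {x | t ≤ g x}) ≤ c := by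
  refine ⟨fun h t ht => ?_, fun h => iSup_le fun t => ?_⟩
  · exact ((min_le_sugeno t).trans h |> min_le_iff.mp).resolve_left ht.not_ge
  · rcases le_or_gt t c with htc | hct
    · exact (min_le_left _ _).trans htc
    · exact (min_le_right _ _).trans (h t hct)

theorem exists_lt_measure_of_lt_sugeno {t : ℝ≥0∞} (ht : t < sugeno μ A g) :
    ∃ s, t < s ∧ t < μ (A ∩ {x | s ≤ g x}) := by
  obtain ⟨s, hs⟩ := lt_iSup_iff.mp ht
  exact ⟨s, lt_min_iff.mp hs⟩

variable [MeasurableSpace X]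

def IsMonotoneSetFunction (μ : Set X → ℝ≥0∞) : Prop :=
  ∀ B C : Set X, MeasurableSet B → MeasurableSet C → B ⊆ C → μ B ≤ μ C

def IsContinuousFromBelow (μ : Set X → ℝ≥0∞) : Prop :=
  ∀ s : ℕ → Set X, (∀ n, MeasurableSet (s n)) → Monotone s → μ (⋃ n, s n) = ⨆ n, μ (s n)

def IsContinuousFromAbove (μ : Set X → ℝ≥0∞) : Prop :=
  ∀ s : ℕ → Set X, (∀ n, MeasurableSet (s n)) → Antitone s → μ (⋂ n, s n) = ⨅ n, μ (s n)

theorem sugeno_le_measure (hμmono : IsMonotoneSetFunction μ)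
    (hA : MeasurableSet A) (hg : Measurable g) : sugeno μ A g ≤ μ A :=
  iSup_le fun _ => (min_le_right _ _).trans
    (hμmono _ _ (hA.inter (hg measurableSet_Ici)) hA inter_subset_left)

theorem measure_sugeno_lt_le (hμbelow : IsContinuousFromBelow μ)
    (hA : MeasurableSet A) (hg : Measurable g) (hp : sugeno μ A g ≠ ⊤) :
    μ (A ∩ {x | sugeno μ A g < g x}) ≤ sugeno μ A g := by
  set p := sugeno μ A g
  obtain ⟨u, hu_anti, hu_mem, hu_lim⟩ := exists_seq_strictAnti_tendsto' hp.lt_top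
  set s : ℕ → Set X := fun n => A ∩ {x | u n ≤ g x}
  have hs_meas : ∀ n, MeasurableSet (s n) := fun n => hA.inter (hg measurableSet_Ici)
  have hs_mono : Monotone s := fun n k hnk x hx => ⟨hx.1, (hu_anti.antitone hnk).trans hx.2⟩
  have hs_union : ⋃ n, s n = A ∩ {x | p < g x} := by
    ext x
    simp only [s, mem_iUnion, mem_inter_iff, mem_ofPred_eq]
    constructor
    · rintro ⟨n, hxA, hx⟩
      exact ⟨hxA, (hu_mem n).1.trans_le hx⟩
    · rintro ⟨hxA, hx⟩
      obtain ⟨n, hn⟩ := (hu_lim.eventually (gt_mem_nhds hx)).exists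
      exact ⟨n, hxA, hn.le⟩
  rw [← hs_union, hμbelow s hs_meas hs_mono]
  exact iSup_le fun n => sugeno_le_iff.mp le_rfl (u n) (hu_mem n).1

theorem sugeno_le_measure_sugeno_le
    (hμmono : IsMonotoneSetFunction μ) (hμabove : IsContinuousFromAbove μ)
    (hA : MeasurableSet A) (hg : Measurable g) :
    sugeno μ A g ≤ μ (A ∩ {x | sugeno μ A g ≤ g x}) := by
  set p := sugeno μ A g
  rcases eq_zero_or_pos p with hp0 | hp_pos
  · exact hp0.le.trans zero_le
  obtain ⟨u, hu_mono, hu_mem, hu_lim⟩ := exists_seq_strictMono_tendsto' hp_pos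
  set s : ℕ → Set X := fun n => A ∩ {x | u n ≤ g x}
  have hs_meas : ∀ n, MeasurableSet (s n) := fun n => hA.inter (hg measurableSet_Ici)
  have hs_anti : Antitone s := fun n k hnk x hx => ⟨hx.1, (hu_mono.monotone hnk).trans hx.2⟩
  have hs_inter : ⋂ n, s n = A ∩ {x | p ≤ g x} := by
    ext x
    simp only [s, mem_iInter, mem_inter_iff, mem_ofPred_eq]
    constructor
    · intro hx
      exact ⟨(hx 0).1, le_of_tendsto' hu_lim fun n => (hx n).2⟩
    · rintro ⟨hxA, hx⟩ n
      exact ⟨hxA, (hu_mem n).2.le.trans hx⟩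
  have hu_le : ∀ n, u n ≤ μ (s n) := fun n => by
    obtain ⟨t, hut, hμt⟩ := exists_lt_measure_of_lt_sugeno (hu_mem n).2
    exact hμt.le.trans (hμmono _ _ (hA.inter (hg measurableSet_Ici)) (hs_meas n)
      fun x hx => ⟨hx.1, hut.le.trans hx.2⟩)
  rw [← hs_inter, hμabove s hs_meas hs_anti]
  refine le_iInf fun k => le_of_tendsto hu_lim (eventually_atTop.mpr ⟨k, fun n hkn => ?_⟩)
  exact (hu_le n).trans (hμmono _ _ (hs_meas n) (hs_meas k) (hs_anti hkn))

variable {H : ℝ → ℝ} {f : X → ℝ}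

theorem sugeno_ofReal_comp_le_max
    (hμmono : IsMonotoneSetFunction μ) (hμbelow : IsContinuousFromBelow μ)
    (hA : MeasurableSet A) (hH : Monotone H) (hf : Measurable f)
    (hp : sugeno μ A (fun x => ENNReal.ofReal (f x)) ≠ ⊤) :
    sugeno μ A (fun x => ENNReal.ofReal (H (f x)))
      ≤ ENNReal.ofReal (max (H (sugeno μ A (fun x => ENNReal.ofReal (f x))).toReal)
          (sugeno μ A (fun x => ENNReal.ofReal (f x))).toReal) := by
  set p := sugeno μ A (fun x => ENNReal.ofReal (f x))
  have hf' : Measurable fun x => ENNReal.ofReal (f x) := ENNReal.measurable_ofReal.comp hf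
  have hHf : Measurable fun x => ENNReal.ofReal (H (f x)) :=
    ENNReal.measurable_ofReal.comp (hH.measurable.comp hf)
  refine sugeno_le_iff.mpr fun t ht => ?_
  have hsub : A ∩ {x | t ≤ ENNReal.ofReal (H (f x))} ⊆ A ∩ {x | p < ENNReal.ofReal (f x)} := by
    rintro x ⟨hxA, hx⟩
    refine ⟨hxA, ?_⟩
    have hH_lt : H p.toReal < H (f x) := by
      by_contra! hle
      exact (ht.trans_le hx).not_ge
        ((ENNReal.ofReal_le_ofReal hle).trans (ENNReal.ofReal_le_ofReal (le_max_left _ _)))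
    rw [← ENNReal.ofReal_toReal hp]
    exact ENNReal.ofReal_lt_ofReal_iff'.mpr
      ⟨hH.reflect_lt hH_lt, ENNReal.toReal_nonneg.trans_lt (hH.reflect_lt hH_lt)⟩
  calc μ (A ∩ {x | t ≤ ENNReal.ofReal (H (f x))})
      ≤ μ (A ∩ {x | p < ENNReal.ofReal (f x)}) :=
        hμmono _ _ (hA.inter (hHf measurableSet_Ici)) (hA.inter (hf' measurableSet_Ioi)) hsub
    _ ≤ p := measure_sugeno_lt_le hμbelow hA hf' hp
    _ = ENNReal.ofReal p.toReal := (ENNReal.ofReal_toReal hp).symm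
    _ ≤ _ := ENNReal.ofReal_le_ofReal (le_max_right _ _)

theorem ofReal_min_le_sugeno_ofReal_comp
    (hμmono : IsMonotoneSetFunction μ) (hμabove : IsContinuousFromAbove μ)
    (hA : MeasurableSet A) (hH : Monotone H) (hf : Measurable f) :
    ENNReal.ofReal (min (H (sugeno μ A (fun x => ENNReal.ofReal (f x))).toReal)
        (sugeno μ A (fun x => ENNReal.ofReal (f x))).toReal)
      ≤ sugeno μ A (fun x => ENNReal.ofReal (H (f x))) := by
  set p := sugeno μ A (fun x => ENNReal.ofReal (f x))
  set m := min (H p.toReal) p.toReal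
  have hf' : Measurable fun x => ENNReal.ofReal (f x) := ENNReal.measurable_ofReal.comp hf
  have hHf : Measurable fun x => ENNReal.ofReal (H (f x)) :=
    ENNReal.measurable_ofReal.comp (hH.measurable.comp hf)
  have hsub : A ∩ {x | p ≤ ENNReal.ofReal (f x)}
      ⊆ A ∩ {x | ENNReal.ofReal m ≤ ENNReal.ofReal (H (f x))} := by
    rintro x ⟨hxA, hx⟩
    refine ⟨hxA, ENNReal.ofReal_le_ofReal_iff'.mpr ?_⟩
    by_cases hm : m ≤ 0
    · exact Or.inr hm
    -- `m > 0` forces `p ≠ ⊤` (as `⊤.toReal = 0`), so `p ≤ ofReal (f x)` gives `p.toReal ≤ f x`.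
    have hp_pos : 0 < p.toReal := (not_le.mp hm).trans_le (min_le_right _ _)
    have hpf : p.toReal ≤ f x := by
      have := ENNReal.toReal_mono ENNReal.ofReal_ne_top hx
      rw [ENNReal.toReal_ofReal'] at this
      exact (le_max_iff.mp this).resolve_right hp_pos.not_ge
    exact Or.inl ((min_le_left _ _).trans (hH hpf))
  refine le_sugeno_of_le_measure ?_
  calc ENNReal.ofReal m ≤ ENNReal.ofReal p.toReal := ENNReal.ofReal_le_ofReal (min_le_right _ _)
    _ ≤ p := ENNReal.ofReal_toReal_le
    _ ≤ μ (A ∩ {x | p ≤ ENNReal.ofReal (f x)}) := sugeno_le_measure_sugeno_le hμmono hμabove hA hf'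
    _ ≤ _ := hμmono _ _ (hA.inter (hf' measurableSet_Ici)) (hA.inter (hHf measurableSet_Ici)) hsub

end Sugeno

theorem stmt19_general [MeasurableSpace X] (μ : Set X → ℝ≥0∞) (A : Set X) (hA : MeasurableSet A)
    (hμmono : ∀ B C : Set X, MeasurableSet B → MeasurableSet C → B ⊆ C → μ B ≤ μ C)
    (hμbelow : ∀ s : ℕ → Set X, (∀ n, MeasurableSet (s n)) → Monotone s →
      μ (⋃ n, s n) = ⨆ n, μ (s n))
    (hμabove : ∀ s : ℕ → Set X, (∀ n, MeasurableSet (s n)) → Antitone s →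
      μ (⋂ n, s n) = ⨅ n, μ (s n))
    (star : ℝ → ℝ → ℝ)
    (hstar : ∀ a b c d : ℝ, 0 ≤ a → a ≤ c → b ≤ d → d ≤ 0 → star a b ≤ star c d)
    (H : ℝ → ℝ) (hH : Monotone H) (hH0 : H 0 = 0)
    (f : X → ℝ) (hf : Measurable f)
    (p₁ p₂ q₁ q₂ : ℝ≥0∞)
    (hp₁ : p₁ = sugeno μ A (fun x => ENNReal.ofReal (f x)))
    (hp₂ : p₂ = sugeno μ A (fun x => ENNReal.ofReal (-f x)))
    (hq₁ : q₁ = sugeno μ A (fun x => ENNReal.ofReal (H (f x))))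
    (hq₂ : q₂ = sugeno μ A (fun x => ENNReal.ofReal (-H (f x))))
    (hp₁fin : p₁ ≠ ⊤) (hq₂fin : q₂ ≠ ⊤) :
    star q₁.toReal (-q₂.toReal)
      ≤ star ((min (ENNReal.ofReal (max (H p₁.toReal) p₁.toReal)) (μ A)).toReal)
             (max (H (-p₂.toReal)) (-p₂.toReal)) := by
  have h_pos : q₁ ≤ min (ENNReal.ofReal (max (H p₁.toReal) p₁.toReal)) (μ A) := by
    rw [hq₁, hp₁]
    exact le_min (sugeno_ofReal_comp_le_max hμmono hμbelow hA hH hf (hp₁ ▸ hp₁fin))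
      (sugeno_le_measure hμmono hA (ENNReal.measurable_ofReal.comp (hH.measurable.comp hf)))
  have h_neg : ENNReal.ofReal (min (-H (-p₂.toReal)) p₂.toReal) ≤ q₂ := by
    have hH' : Monotone fun y => -H (-y) := fun a b hab => neg_le_neg (hH (neg_le_neg hab))
    simpa only [← hp₂, ← hq₂, neg_neg] using
      ofReal_min_le_sugeno_ofReal_comp (f := fun x => -f x) hμmono hμabove hA hH' hf.neg
  have h_nonpos : max (H (-p₂.toReal)) (-p₂.toReal) ≤ 0 := by
    have := neg_nonpos.mpr (ENNReal.toReal_nonneg (a := p₂))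
    exact max_le (hH0 ▸ hH this) this
  have h_fin : min (ENNReal.ofReal (max (H p₁.toReal) p₁.toReal)) (μ A) ≠ ⊤ :=
    ne_top_of_le_ne_top ENNReal.ofReal_ne_top (min_le_left _ _)
  refine hstar _ _ _ _ ENNReal.toReal_nonneg (ENNReal.toReal_mono h_fin h_pos) ?_ h_nonpos
  rw [neg_le, ← min_neg_neg, neg_neg]
  exact (ENNReal.ofReal_le_iff_le_toReal hq₂fin).mp h_neg

/-- Jensen type upper bound for the ⋆-symmetric Sugeno integral
`Su^⋆(H(f)) = Su((H∘f)⁺) ⋆ (− Su((H∘f)⁻))`, where `⋆ : [0,∞)×(−∞,0] → ℝ` is a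
nondecreasing binary map (modelled as a map `ℝ → ℝ → ℝ` monotone on that domain). -/
theorem stmt19 [MeasurableSpace X] (μ : Set X → ℝ≥0∞) (A : Set X) (hA : MeasurableSet A)
    (hμ0 : μ ∅ = 0)
    (hμmono : ∀ B C : Set X, MeasurableSet B → MeasurableSet C → B ⊆ C → μ B ≤ μ C)
    (hμbelow : ∀ s : ℕ → Set X, (∀ n, MeasurableSet (s n)) → Monotone s →
      μ (⋃ n, s n) = ⨆ n, μ (s n))
    (hμabove : ∀ s : ℕ → Set X, (∀ n, MeasurableSet (s n)) → Antitone s →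
      μ (⋂ n, s n) = ⨅ n, μ (s n))
    (star : ℝ → ℝ → ℝ)
    (hstar : ∀ a b c d : ℝ, 0 ≤ a → a ≤ c → b ≤ d → d ≤ 0 → star a b ≤ star c d)
    (H : ℝ → ℝ) (hH : Monotone H) (hH0 : H 0 = 0)
    (f : X → ℝ) (hf : Measurable f)
    (p₁ p₂ q₁ q₂ : ℝ≥0∞)
    (hp₁ : p₁ = sugeno μ A (fun x => ENNReal.ofReal (f x)))
    (hp₂ : p₂ = sugeno μ A (fun x => ENNReal.ofReal (-f x)))
    (hq₁ : q₁ = sugeno μ A (fun x => ENNReal.ofReal (H (f x))))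
    (hq₂ : q₂ = sugeno μ A (fun x => ENNReal.ofReal (-H (f x))))
    (hp₁fin : p₁ ≠ ⊤) (hp₂fin : p₂ ≠ ⊤) (hq₁fin : q₁ ≠ ⊤) (hq₂fin : q₂ ≠ ⊤)
    (hsupH : ∀ ε : ℝ, 0 < ε → ∃ y : ℝ, p₁.toReal - ε ≤ H y) :
    star q₁.toReal (-q₂.toReal)
      ≤ star ((min (ENNReal.ofReal (max (H p₁.toReal) p₁.toReal)) (μ A)).toReal)
             (max (H (-p₂.toReal)) (-p₂.toReal)) :=
  stmt19_general μ A hA hμmono hμbelow hμabove star hstar H hH hH0 f hf p₁ p₂ q₁ q₂ hp₁ hp₂ hq₁ hq₂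
    hp₁fin hq₂fin
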